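/- arXiv:2602.14832 — 7 statements merged into one kernel-verified Lean document; each statement's English description precedes it below -/
import Mathlib

section
/- Let q = 2^r be a power of 2, m ≥ 1, F_q ⊆ F_{q^m} finite fields, ψ a nontrivial additive character of F_q with values in ℂ, Tr : F_{q^m} → F_q the relative trace and Norm : F_{q^m} → F_q the relative norm. Set f(x) = Tr(x), g(y) = Tr(y²), h(z) = Norm(z), and for a ∈ F_q, (b,c,d) ∈ F_{q^m}³ define Λ = Σ_{s ∈ F_q, s≠0} ψ(s·a) · Σ_{ω ∈ F_q, ω≠0} Σ_{(x,y,z) ∈ F_{q^m}³} ψ(ω·(f(x)+g(y)+h(z))) · ψ(Tr(s·(bx+cy+dz))). If b does not lie in the image of F_q \ {0} under the inclusion F_q → F_{q^m}, or c does not lie in that image, then Λ = 0. -/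
section Aux

variable {Fq Fqm : Type} [Field Fq] [Fintype Fq] [Field Fqm] [Fintype Fqm] [Algebra Fq Fqm]

/-- In characteristic two, the relative trace commutes with squaring. -/
private lemma aux_trace_sq [CharP Fq 2] (x : Fqm) :
    Algebra.trace Fq Fqm (x ^ 2) = (Algebra.trace Fq Fqm x) ^ 2 := by
  haveI : CharP Fqm 2 := charP_of_injective_algebraMap' Fq (A := Fqm) 2
  haveI : Fact (Nat.Prime 2) := ⟨Nat.prime_two⟩
  apply (algebraMap Fq Fqm).injective
  rw [RingHom.map_pow, trace_eq_sum_automorphisms, trace_eq_sum_automorphisms, sum_pow_char]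
  exact Finset.sum_congr rfl fun σ _ => map_pow σ x 2

/-- For `w ≠ 0` the map `y ↦ Tr (w * y)` is surjective. -/
private lemma aux_tr_mul_surj {w : Fqm} (hw : w ≠ 0) (t : Fq) :
    ∃ y : Fqm, Algebra.trace Fq Fqm (w * y) = t := by
  obtain ⟨u, hu⟩ := Algebra.trace_surjective Fq Fqm t
  exact ⟨w⁻¹ * u, by rw [← mul_assoc, mul_inv_cancel₀ hw, one_mul, hu]⟩

/-- Nondegeneracy of the trace form. -/
private lemma aux_tr_nondegen {w : Fqm} (h : ∀ y : Fqm, Algebra.trace Fq Fqm (w * y) = 0) :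
    w = 0 := by
  by_contra hw
  obtain ⟨y, hy⟩ := aux_tr_mul_surj hw (1 : Fq)
  exact one_ne_zero ((h y ▸ hy).symm)

/-- An additive-character sum over `Fqm` vanishes when the composed character is nontrivial. -/
private lemma aux_char_sum_zero (ψ : AddChar Fq ℂ) (f : Fqm → Fq)
    (hadd : ∀ x y : Fqm, f (x + y) = f x + f y) (hne : ∃ y : Fqm, ψ (f y) ≠ 1) :
    ∑ y : Fqm, ψ (f y) = 0 := by
  have hf0 : f 0 = 0 := by
    have := hadd 0 0
    simpa using this.symm
  let M : Fqm →+ Fq := ⟨⟨f, hf0⟩, hadd⟩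
  have : ∑ y : Fqm, (ψ.compAddMonoidHom M) y = 0 := by
    rw [AddChar.sum_eq_zero_iff_ne_zero, AddChar.ne_zero_iff]
    exact hne
  simpa [AddChar.compAddMonoidHom_apply, M] using this

end Aux

/-- Vanishing case of Lemma 4.2: for `q = 2^r`, `f = Tr`, `g = Tr(·²)`,
`h = Norm`, the parameter `Λ^{f,g,h}_{a,b,c,d}` vanishes when `b` or `c` does not lie in the
image of `F_q \ {0}` in `F_{q^m}`. -/
theorem stmt_3 (r m : ℕ) (hr : 1 ≤ r) (hm : 1 ≤ m)
    (Fq Fqm : Type) [Field Fq] [Fintype Fq] [DecidableEq Fq]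
    [Field Fqm] [Fintype Fqm] [Algebra Fq Fqm]
    (hq_card : Fintype.card Fq = 2 ^ r) (hqm_card : Fintype.card Fqm = (2 ^ r) ^ m)
    (ψ : AddChar Fq ℂ) (hψ : ψ ≠ 1)
    (a : Fq) (b c d : Fqm)
    (hbc : b ∉ (⇑(algebraMap Fq Fqm)) '' {s : Fq | s ≠ 0} ∨
           c ∉ (⇑(algebraMap Fq Fqm)) '' {s : Fq | s ≠ 0}) :
    ∑ s ∈ Finset.univ.filter (fun s : Fq => s ≠ 0),
        ψ (s * a) *
          ∑ ω ∈ Finset.univ.filter (fun ω : Fq => ω ≠ 0),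
            ∑ p : Fqm × Fqm × Fqm,
              ψ (ω * (Algebra.trace Fq Fqm p.1 + Algebra.trace Fq Fqm (p.2.1 ^ 2) +
                  Algebra.norm Fq p.2.2)) *
                ψ (Algebra.trace Fq Fqm (s • (b * p.1 + c * p.2.1 + d * p.2.2))) = 0 := by
  classical
  -- characteristic 2
  haveI hchar : CharP Fq 2 := by
    obtain ⟨p, hc⟩ := CharP.exists Fq
    haveI := hc
    obtain ⟨n, hp, hcard⟩ := FiniteField.card Fq p
    have hdvd : p ∣ 2 ^ r := by
      rw [← hq_card, hcard]
      exact dvd_pow_self p n.2.ne'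
    have hp2 : p = 2 :=
      (Nat.prime_dvd_prime_iff_eq hp Nat.prime_two).mp (hp.dvd_of_dvd_pow hdvd)
    rwa [hp2] at hc
  haveI : CharP Fqm 2 := charP_of_injective_algebraMap' Fq (A := Fqm) 2
  haveI : Fact (Nat.Prime 2) := ⟨Nat.prime_two⟩
  obtain ⟨t₀, ht₀⟩ : ∃ t : Fq, ψ t ≠ 1 := AddChar.ne_one_iff.mp hψ
  set ι : Fq →+* Fqm := algebraMap Fq Fqm with hι
  have hιinj : Function.Injective ι := ι.injective
  set Tr : Fqm →ₗ[Fq] Fq := Algebra.trace Fq Fqm with hTr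
  have hsq_surj : Function.Surjective (fun u : Fq => u ^ 2) := by
    have : Function.Injective (fun u : Fq => u ^ 2) := fun u v huv => by
      have huv' : u ^ 2 = v ^ 2 := huv
      have h2 : (2 : Fq) = 0 := CharTwo.two_eq_zero
      have hz : (u - v) ^ 2 = 0 := by linear_combination huv' + (v ^ 2 - u * v) * h2
      have := pow_eq_zero_iff (n := 2) (by norm_num) |>.mp hz
      exact sub_eq_zero.mp this
    exact Finite.injective_iff_surjective.mp this
  apply Finset.sum_eq_zero
  intro s hs
  have hs' : s ≠ 0 := (Finset.mem_filter.mp hs).2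
  rw [mul_eq_zero]; right
  apply Finset.sum_eq_zero
  intro ω hω
  have hω' : ω ≠ 0 := (Finset.mem_filter.mp hω).2
  have hιs : ι s ≠ 0 := fun h => hs' (hιinj (by rw [h, map_zero]))
  rcases hbc with hb | hc
  · -- case b ∉ image
    set e : Fqm := ι ω + ι s * b with he_def
    have he : e ≠ 0 := by
      intro h
      apply hb
      refine ⟨ω * s⁻¹, by simp [hω', hs'], ?_⟩
      have hb' : ι s * b = ι ω := by
        have : ι ω = -(ι s * b) := by linear_combination h
        rw [this, CharTwo.neg_eq]
      field_simp [hι]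
      rw [map_div₀, ← hb', mul_div_cancel_left₀ _ hιs]
    have key : ∀ x y z : Fqm,
        ψ (ω * (Tr x + Tr (y ^ 2) + Algebra.norm Fq z)) * ψ (Tr (s • (b * x + c * y + d * z)))
        = ψ (Tr (e * x)) *
          (ψ (ω * (Tr (y ^ 2) + Algebra.norm Fq z)) * ψ (Tr (s • (c * y + d * z)))) := by
      intro x y z
      rw [← AddChar.map_add_eq_mul, ← AddChar.map_add_eq_mul, ← AddChar.map_add_eq_mul]
      congr 1
      have h1 : Tr (e * x) = ω * Tr x + s * Tr (b * x) := by
        have : e * x = ω • x + s • (b * x) := by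
          simp only [Algebra.smul_def, he_def]; ring
        rw [this, map_add, map_smul, map_smul, smul_eq_mul, smul_eq_mul]
      have h2 : Tr (s • (b * x + c * y + d * z))
          = s * Tr (b * x) + Tr (s • (c * y + d * z)) := by
        rw [show b * x + c * y + d * z = b * x + (c * y + d * z) by ring,
          smul_add, map_add, map_smul, smul_eq_mul]
      rw [h1, h2]; ring
    rw [Fintype.sum_prod_type]
    have hxsum : ∑ x : Fqm, ψ (Tr (e * x)) = 0 := by
      apply aux_char_sum_zero ψ (fun x => Tr (e * x))
      · intro x y; rw [mul_add, map_add]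
      · obtain ⟨x, hx⟩ := aux_tr_mul_surj he t₀
        exact ⟨x, by rw [hx]; exact ht₀⟩
    calc ∑ x : Fqm, ∑ q : Fqm × Fqm,
          ψ (ω * (Tr x + Tr (q.1 ^ 2) + Algebra.norm Fq q.2)) *
            ψ (Tr (s • (b * x + c * q.1 + d * q.2)))
        = ∑ x : Fqm, ∑ q : Fqm × Fqm, ψ (Tr (e * x)) *
            (ψ (ω * (Tr (q.1 ^ 2) + Algebra.norm Fq q.2)) * ψ (Tr (s • (c * q.1 + d * q.2)))) :=
          Finset.sum_congr rfl fun x _ => Finset.sum_congr rfl fun q _ => key x q.1 q.2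
      _ = (∑ x : Fqm, ψ (Tr (e * x))) * ∑ q : Fqm × Fqm,
            (ψ (ω * (Tr (q.1 ^ 2) + Algebra.norm Fq q.2)) * ψ (Tr (s • (c * q.1 + d * q.2)))) :=
          (Finset.sum_mul_sum _ _ _ _).symm
      _ = 0 := by rw [hxsum, zero_mul]
  · -- case c ∉ image
    obtain ⟨ρ₀, hρ₀x⟩ := hsq_surj ω
    have hρ₀ : ρ₀ ^ 2 = ω := hρ₀x
    have hρ₀ne : ρ₀ ≠ 0 := fun h => hω' (by rw [← hρ₀, h]; ring)
    set ρ : Fqm := ι ρ₀ with hρ_def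
    have hρ : ρ ≠ 0 := fun h => hρ₀ne (hιinj (by rw [map_zero]; exact h))
    set e : Fqm := ι s * c with he_def
    set F : Fqm → Fq := fun y => Tr (ρ * y) ^ 2 + Tr (e * y) with hF_def
    have hFadd : ∀ x y : Fqm, F (x + y) = F x + F y := by
      intro x y
      simp only [hF_def, mul_add, map_add, CharTwo.add_sq]
      ring
    -- the argument identity
    have harg : ∀ y : Fqm, ω * Tr (y ^ 2) + Tr (s • (c * y)) = F y := by
      intro y
      have h1 : ω * Tr (y ^ 2) = Tr (ρ * y) ^ 2 := by
        have : (ρ * y) ^ 2 = ω • y ^ 2 := by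
          rw [Algebra.smul_def, ← hρ₀, map_pow]; ring
        rw [← aux_trace_sq, this, map_smul, smul_eq_mul]
      have h2 : Tr (s • (c * y)) = Tr (e * y) := by
        rw [Algebra.smul_def, he_def, mul_assoc]
      rw [h1, h2, hF_def]
    -- the y-sum vanishes
    have hysum : ∑ y : Fqm, ψ (F y) = 0 := by
      apply aux_char_sum_zero ψ F hFadd
      by_cases hker : ∀ v : Fqm, Tr (ρ * v) = 0 → Tr (e * v) = 0
      · -- then e is an Fq-multiple of ρ
        obtain ⟨y₁, hy₁⟩ := aux_tr_mul_surj hρ (1 : Fq)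
        set lam : Fq := Tr (e * y₁) with hlam_def
        have hrel : ∀ y : Fqm, Tr (e * y) = lam * Tr (ρ * y) := by
          intro y
          have hv : Tr (ρ * (y - Tr (ρ * y) • y₁)) = 0 := by
            rw [mul_sub, map_sub, mul_smul_comm, map_smul, smul_eq_mul, hy₁]
            ring
          have := hker _ hv
          rw [mul_sub, map_sub, mul_smul_comm, map_smul, smul_eq_mul, ← hlam_def,
            sub_eq_zero] at this
          rw [this]; ring
        have hlamρ : e = ι lam * ρ := by
          have : ∀ y : Fqm, Tr ((e - ι lam * ρ) * y) = 0 := by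
            intro y
            have hsm : ι lam * (ρ * y) = lam • (ρ * y) := (Algebra.smul_def lam (ρ * y)).symm
            rw [sub_mul, map_sub, hrel, mul_assoc, hsm, map_smul, smul_eq_mul]
            ring
          exact sub_eq_zero.mp (aux_tr_nondegen this)
        by_cases hlam0 : lam = 0
        · -- e = 0, so F y = Tr(ρ y)²; find y with ψ (F y) ≠ 1
          have he0 : e = 0 := by rw [hlamρ, hlam0, map_zero, zero_mul]
          obtain ⟨u, hux⟩ := hsq_surj t₀
          have hu : u ^ 2 = t₀ := hux
          obtain ⟨y, hy⟩ := aux_tr_mul_surj hρ u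
          refine ⟨y, ?_⟩
          have : F y = t₀ := by
            rw [hF_def]
            simp only
            rw [he0, zero_mul, map_zero, add_zero, hy, hu]
          rw [this]; exact ht₀
        · -- c ∈ image, contradiction
          exfalso
          apply hc
          refine ⟨lam * ρ₀ * s⁻¹, by simp [hlam0, hρ₀ne, hs'], ?_⟩
          have : ι s * c = ι lam * ι ρ₀ := by rw [← he_def, hlamρ, hρ_def]
          field_simp [hι]
          rw [map_div₀, map_mul, ← this, mul_div_cancel_left₀ _ hιs]
      · push_neg at hker
        obtain ⟨v, hv1, hv2⟩ := hker
        set v' : Fqm := (t₀ * (Tr (e * v))⁻¹) • v with hv'_def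
        refine ⟨v', ?_⟩
        have h1 : Tr (ρ * v') = 0 := by
          rw [hv'_def, mul_smul_comm, map_smul, smul_eq_mul, hv1, mul_zero]
        have h2 : Tr (e * v') = t₀ := by
          rw [hv'_def, mul_smul_comm, map_smul, smul_eq_mul, mul_assoc,
            inv_mul_cancel₀ hv2, mul_one]
        have : F v' = t₀ := by
          rw [hF_def]; simp only
          rw [h1, h2]; ring
        rw [this]; exact ht₀
    -- assemble
    have key : ∀ x y z : Fqm,
        ψ (ω * (Tr x + Tr (y ^ 2) + Algebra.norm Fq z)) * ψ (Tr (s • (b * x + c * y + d * z)))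
        = ψ (F y) * (ψ (ω * (Tr x + Algebra.norm Fq z)) * ψ (Tr (s • (b * x + d * z)))) := by
      intro x y z
      rw [← AddChar.map_add_eq_mul, ← AddChar.map_add_eq_mul, ← AddChar.map_add_eq_mul]
      congr 1
      have h2 : Tr (s • (b * x + c * y + d * z))
          = Tr (s • (c * y)) + Tr (s • (b * x + d * z)) := by
        rw [show b * x + c * y + d * z = c * y + (b * x + d * z) by ring,
          smul_add, map_add]
      rw [h2, ← harg y]; ring
    rw [Fintype.sum_prod_type]
    apply Finset.sum_eq_zero
    intro x _
    rw [Fintype.sum_prod_type]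
    calc ∑ y : Fqm, ∑ z : Fqm,
          ψ (ω * (Tr x + Tr (y ^ 2) + Algebra.norm Fq z)) *
            ψ (Tr (s • (b * x + c * y + d * z)))
        = ∑ y : Fqm, ∑ z : Fqm, ψ (F y) *
            (ψ (ω * (Tr x + Algebra.norm Fq z)) * ψ (Tr (s • (b * x + d * z)))) :=
          Finset.sum_congr rfl fun y _ => Finset.sum_congr rfl fun z _ => key x y z
      _ = (∑ y : Fqm, ψ (F y)) * ∑ z : Fqm,
            (ψ (ω * (Tr x + Algebra.norm Fq z)) * ψ (Tr (s • (b * x + d * z)))) :=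
          (Finset.sum_mul_sum _ _ _ _).symm
      _ = 0 := by rw [hysum, zero_mul]
end

section
/- Let q be an odd prime power, m ≥ 2 an even integer, F_q ⊆ F_{q^m} finite fields, ψ a nontrivial additive character of F_q with values in ℂ, Tr : F_{q^m} → F_q the relative trace and Norm : F_{q^m} → F_q the relative norm. Set f(x) = Tr(x), g(y) = Tr(y²), h(z) = Norm(z). Let χ' = ψ ∘ Tr be the induced additive character of F_{q^m}, η' the quadratic character of F_{q^m}, and G(η', χ') = Σ_{u ∈ F_{q^m}, u≠0} η'(u)·χ'(u) the associated Gauss sum. Let a ∈ F_q, c, d ∈ F_{q^m}, and let b₀ ∈ F_q \ {0} with b ∈ F_{q^m} its image under the inclusion F_q → F_{q^m}. Then Σ_{s ∈ F_q, s≠0} ψ(s·a) · Σ_{ω ∈ F_q, ω≠0} Σ_{(x,y,z) ∈ F_{q^m}³} ψ(ω·(f(x)+g(y)+h(z))) · ψ(Tr(s·(bx+cy+dz))) = G(η', χ') · q^m · Σ_{s ∈ F_q, s≠0} Σ_{z ∈ F_{q^m}} ψ(s·(a + Tr(c²/(4b)) + Tr(d·z) − b₀·Norm(z))). -/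
open Finset

private lemma aux_charsum {F : Type} [Field F] [Fintype F] [DecidableEq F]
    {ψ' : AddChar F ℂ} (hψ' : ψ' ≠ 1) (t : F) :
    ∑ x : F, ψ' (t * x) = if t = 0 then (Fintype.card F : ℂ) else 0 := by
  simp_rw [mul_comm t]
  exact_mod_cast AddChar.sum_mulShift t (AddChar.IsPrimitive.of_ne_one hψ')

private lemma aux_gauss {F : Type} [Field F] [Fintype F] [DecidableEq F]
    (hch : ringChar F ≠ 2) {ψ' : AddChar F ℂ} (hψ' : ψ' ≠ 1)
    {α : F} (hα0 : α ≠ 0) (hα : IsSquare α) :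
    ∑ y : F, ψ' (α * y ^ 2) =
      ∑ u ∈ univ.filter (fun u : F => u ≠ 0), ((quadraticChar F u : ℤ) : ℂ) * ψ' u := by
  have h1 : ∑ y : F, ψ' (α * y ^ 2)
      = ∑ u : F, (((quadraticChar F u : ℤ) : ℂ) + 1) * ψ' (α * u) := by
    rw [← Finset.sum_fiberwise univ (fun y : F => y ^ 2) (fun y => ψ' (α * y ^ 2))]
    refine Finset.sum_congr rfl fun u _ => ?_
    have hcard : ((univ.filter (fun y : F => y ^ 2 = u)).card : ℤ)
        = quadraticChar F u + 1 := by
      have := quadraticChar_card_sqrts hch u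
      rw [← this]
      congr 1
      simp [Set.toFinset_setOf]
    calc ∑ y ∈ univ.filter (fun y : F => y ^ 2 = u), ψ' (α * y ^ 2)
        = ∑ y ∈ univ.filter (fun y : F => y ^ 2 = u), ψ' (α * u) := by
          refine Finset.sum_congr rfl fun y hy => ?_
          rw [(Finset.mem_filter.mp hy).2]
      _ = ((univ.filter (fun y : F => y ^ 2 = u)).card : ℂ) * ψ' (α * u) := by
          rw [Finset.sum_const, nsmul_eq_mul]
      _ = _ := by
          congr 1
          exact_mod_cast congrArg (Int.cast : ℤ → ℂ) hcard
  rw [h1]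
  simp_rw [add_mul, one_mul, Finset.sum_add_distrib]
  rw [aux_charsum hψ' α, if_neg hα0, add_zero]
  have hqα : (quadraticChar F α⁻¹ : ℤ) = 1 := by
    have : quadraticChar F α⁻¹ = 1 :=
      (quadraticChar_one_iff_isSquare (inv_ne_zero hα0)).mpr hα.inv
    exact_mod_cast this
  have h2 : ∑ u : F, ((quadraticChar F u : ℤ) : ℂ) * ψ' (α * u)
      = ∑ u : F, ((quadraticChar F u : ℤ) : ℂ) * ψ' u := by
    rw [← Equiv.sum_comp (Equiv.mulLeft₀ α⁻¹ (inv_ne_zero hα0))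
      (fun u => ((quadraticChar F u : ℤ) : ℂ) * ψ' (α * u))]
    refine Finset.sum_congr rfl fun u _ => ?_
    show ((quadraticChar F (α⁻¹ * u) : ℤ) : ℂ) * ψ' (α * (α⁻¹ * u)) = _
    rw [mul_inv_cancel_left₀ hα0]
    congr 1
    rw [map_mul]
    push_cast
    rw [hqα]
    ring
  rw [h2, Finset.sum_filter]
  refine Finset.sum_congr rfl fun u _ => ?_
  by_cases hu : u = 0 <;> simp [hu]

private lemma aux_square (q m : ℕ) (hq1 : 1 < q) (hodd : Odd q) (hme : Even m) (hm : 2 ≤ m)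
    (Fq Fqm : Type) [Field Fq] [Fintype Fq] [Field Fqm] [Fintype Fqm] [DecidableEq Fqm]
    [Algebra Fq Fqm]
    (hq_card : Fintype.card Fq = q) (hqm_card : Fintype.card Fqm = q ^ m)
    (hch : ringChar Fqm ≠ 2)
    (u : Fq) (hu : u ≠ 0) : IsSquare (algebraMap Fq Fqm u) := by
  have hu' : algebraMap Fq Fqm u ≠ 0 := (map_ne_zero _).mpr hu
  rw [FiniteField.isSquare_iff hch hu']
  obtain ⟨j, hj⟩ := hodd
  have hdvd : ∃ k, q ^ m - 1 = 2 * ((q - 1) * k) := by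
    have h1 : q ^ 2 - 1 ∣ q ^ m - 1 := by
      obtain ⟨i, hi⟩ := hme
      have : q ^ m = (q ^ 2) ^ (m / 2) := by
        rw [← pow_mul]; congr 1; omega
      rw [this]
      simpa using Nat.sub_dvd_pow_sub_pow (q ^ 2) 1 (m / 2)
    obtain ⟨t, ht⟩ := h1
    have h2 : q ^ 2 - 1 = 2 * ((q - 1) * (j + 1)) := by
      subst hj
      have e1 : (2 * j + 1) ^ 2 = (4 * (j * j) + 4 * j) + 1 := by ring
      have e2 : 2 * j + 1 - 1 = 2 * j := by omega
      rw [e1, e2, Nat.add_sub_cancel]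
      ring
    exact ⟨(j + 1) * t, by rw [ht, h2]; ring⟩
  obtain ⟨k, hk⟩ := hdvd
  have hqm1 : 1 ≤ q ^ m := Nat.one_le_pow _ _ (by omega)
  have hqmodd : q ^ m % 2 = 1 := Nat.odd_iff.mp (Odd.pow ⟨j, hj⟩)
  have hdiv : Fintype.card Fqm / 2 = (q - 1) * k := by
    rw [hqm_card]; omega
  rw [hdiv, ← map_pow, pow_mul]
  have : u ^ (q - 1) = 1 := by
    rw [← hq_card]
    exact FiniteField.pow_card_sub_one_eq_one u hu
  rw [this, one_pow, map_one]

/-- Lemma 4.4: for odd `q`, even `m`, `f = Tr`, `g = Tr(·²)`, `h = Norm`,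
and `b` the image of a nonzero `b₀ ∈ F_q`, the parameter `Λ^{f,g,h}_{a,b,c,d}` equals
`G(η',χ') · q^m · Σ_{s≠0} Σ_z ψ(s·(a + Tr(c²/(4b)) + Tr(dz) − b₀·Norm(z)))`. -/
theorem stmt_5 (q m : ℕ) (hq : IsPrimePow q) (hodd : Odd q) (hm : 2 ≤ m) (hme : Even m)
    (Fq Fqm : Type) [Field Fq] [Fintype Fq] [DecidableEq Fq]
    [Field Fqm] [Fintype Fqm] [DecidableEq Fqm] [Algebra Fq Fqm]
    (hq_card : Fintype.card Fq = q) (hqm_card : Fintype.card Fqm = q ^ m)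
    (ψ : AddChar Fq ℂ) (hψ : ψ ≠ 1)
    (a : Fq) (c d : Fqm) (b₀ : Fq) (hb₀ : b₀ ≠ 0) :
    ∑ s ∈ Finset.univ.filter (fun s : Fq => s ≠ 0),
        ψ (s * a) *
          ∑ ω ∈ Finset.univ.filter (fun ω : Fq => ω ≠ 0),
            ∑ p : Fqm × Fqm × Fqm,
              ψ (ω * (Algebra.trace Fq Fqm p.1 + Algebra.trace Fq Fqm (p.2.1 ^ 2) +
                  Algebra.norm Fq p.2.2)) *
                ψ (Algebra.trace Fq Fqm (s • (algebraMap Fq Fqm b₀ * p.1 +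
                    c * p.2.1 + d * p.2.2))) =
      (∑ u ∈ Finset.univ.filter (fun u : Fqm => u ≠ 0),
          ((quadraticChar Fqm u : ℤ) : ℂ) * ψ (Algebra.trace Fq Fqm u)) *
        (q : ℂ) ^ m *
        ∑ s ∈ Finset.univ.filter (fun s : Fq => s ≠ 0),
          ∑ z : Fqm,
            ψ (s * (a + Algebra.trace Fq Fqm (c ^ 2 / (4 * algebraMap Fq Fqm b₀)) +
                Algebra.trace Fq Fqm (d * z) - b₀ * Algebra.norm Fq z)) := by
  classical
  have hq1 : 1 < q := hq.one_lt
  have hqm_odd : Odd (q ^ m) := hodd.pow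
  have hch : ringChar Fqm ≠ 2 := by
    intro h
    have h2 := FiniteField.even_card_iff_char_two.mp h
    rw [hqm_card] at h2
    have h3 := Nat.odd_iff.mp hqm_odd
    omega
  have h2ne : (2 : Fqm) ≠ 0 := Ring.two_ne_zero hch
  have h4ne : (4 : Fqm) ≠ 0 := by
    have h44 : (4 : Fqm) = 2 * 2 := by norm_num
    rw [h44]
    exact mul_ne_zero h2ne h2ne
  set b : Fqm := algebraMap Fq Fqm b₀ with hb
  have hbne : b ≠ 0 := (map_ne_zero _).mpr hb₀
  set χ : AddChar Fqm ℂ := ψ.compAddMonoidHom (Algebra.trace Fq Fqm).toAddMonoidHom with hχ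
  have hχapp : ∀ x : Fqm, χ x = ψ (Algebra.trace Fq Fqm x) := fun x => rfl
  have hχne : χ ≠ 1 := by
    rw [AddChar.ne_one_iff]
    obtain ⟨t, ht⟩ := AddChar.ne_one_iff.mp hψ
    obtain ⟨x, hx⟩ := Algebra.trace_surjective Fq Fqm t
    exact ⟨x, by rw [hχapp, hx]; exact ht⟩
  have hTmul : ∀ (r : Fq) (x : Fqm),
      Algebra.trace Fq Fqm (algebraMap Fq Fqm r * x) = r * Algebra.trace Fq Fqm x := by
    intro r x
    rw [← Algebra.smul_def, map_smul, smul_eq_mul]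
  have hcard : ((Fintype.card Fqm : ℕ) : ℂ) = (q : ℂ) ^ m := by
    rw [hqm_card]; push_cast; ring
  set G : ℂ := ∑ u ∈ Finset.univ.filter (fun u : Fqm => u ≠ 0),
      ((quadraticChar Fqm u : ℤ) : ℂ) * ψ (Algebra.trace Fq Fqm u) with hG
  set B : Fq := Algebra.trace Fq Fqm (c ^ 2 / (4 * b)) with hB
  have key : ∀ s : Fq, s ≠ 0 →
      (∑ ω ∈ Finset.univ.filter (fun ω : Fq => ω ≠ 0),
        ∑ p : Fqm × Fqm × Fqm,
          ψ (ω * (Algebra.trace Fq Fqm p.1 + Algebra.trace Fq Fqm (p.2.1 ^ 2) +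
              Algebra.norm Fq p.2.2)) *
            ψ (Algebra.trace Fq Fqm (s • (b * p.1 + c * p.2.1 + d * p.2.2))))
      = (q : ℂ) ^ m * (ψ (s * B) * G *
          ∑ z : Fqm, ψ ((-(s * b₀)) * Algebra.norm Fq z) *
            ψ (s * Algebra.trace Fq Fqm (d * z))) := by
    intro s hs
    set s' : Fqm := algebraMap Fq Fqm s with hs'
    have hs'ne : s' ≠ 0 := (map_ne_zero _).mpr hs
    have hfact : ∀ ω : Fq,
        (∑ p : Fqm × Fqm × Fqm,
          ψ (ω * (Algebra.trace Fq Fqm p.1 + Algebra.trace Fq Fqm (p.2.1 ^ 2) +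
              Algebra.norm Fq p.2.2)) *
            ψ (Algebra.trace Fq Fqm (s • (b * p.1 + c * p.2.1 + d * p.2.2))))
        = (∑ x : Fqm, ψ (ω * Algebra.trace Fq Fqm x) *
              ψ (Algebra.trace Fq Fqm (s • (b * x)))) *
          ((∑ y : Fqm, ψ (ω * Algebra.trace Fq Fqm (y ^ 2)) *
              ψ (Algebra.trace Fq Fqm (s • (c * y)))) *
           (∑ z : Fqm, ψ (ω * Algebra.norm Fq z) *
              ψ (Algebra.trace Fq Fqm (s • (d * z))))) := by
      intro ω
      rw [Fintype.sum_mul_sum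
        (fun y : Fqm => ψ (ω * Algebra.trace Fq Fqm (y ^ 2)) *
          ψ (Algebra.trace Fq Fqm (s • (c * y))))
        (fun z : Fqm => ψ (ω * Algebra.norm Fq z) *
          ψ (Algebra.trace Fq Fqm (s • (d * z))))]
      rw [Fintype.sum_mul_sum
        (fun x : Fqm => ψ (ω * Algebra.trace Fq Fqm x) *
          ψ (Algebra.trace Fq Fqm (s • (b * x))))
        (fun y : Fqm => ∑ z : Fqm,
          ψ (ω * Algebra.trace Fq Fqm (y ^ 2)) * ψ (Algebra.trace Fq Fqm (s • (c * y))) *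
            (ψ (ω * Algebra.norm Fq z) * ψ (Algebra.trace Fq Fqm (s • (d * z)))))]
      simp only [Fintype.sum_prod_type, Finset.mul_sum]
      refine Finset.sum_congr rfl fun x _ => ?_
      refine Finset.sum_congr rfl fun y _ => ?_
      refine Finset.sum_congr rfl fun z _ => ?_
      have e1 : ω * (Algebra.trace Fq Fqm x + Algebra.trace Fq Fqm (y ^ 2) +
          Algebra.norm Fq z) = ω * Algebra.trace Fq Fqm x +
          (ω * Algebra.trace Fq Fqm (y ^ 2) + ω * Algebra.norm Fq z) := by ring
      have e2 : s • (b * x + c * y + d * z) = s • (b * x) + (s • (c * y) + s • (d * z)) := by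
        rw [← smul_add, ← smul_add]
        ring_nf
      rw [e1, e2, map_add (Algebra.trace Fq Fqm), map_add (Algebra.trace Fq Fqm), ψ.map_add_eq_mul, ψ.map_add_eq_mul,
        ψ.map_add_eq_mul, ψ.map_add_eq_mul]
      ring
    have hX : ∀ ω : Fq, (∑ x : Fqm, ψ (ω * Algebra.trace Fq Fqm x) *
          ψ (Algebra.trace Fq Fqm (s • (b * x))))
        = if ω = -(s * b₀) then (q : ℂ) ^ m else 0 := by
      intro ω
      have hterm : ∀ x : Fqm, ψ (ω * Algebra.trace Fq Fqm x) *
          ψ (Algebra.trace Fq Fqm (s • (b * x)))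
          = χ (algebraMap Fq Fqm (ω + s * b₀) * x) := by
        intro x
        rw [hχapp, ← ψ.map_add_eq_mul]
        congr 1
        have e3 : algebraMap Fq Fqm (ω + s * b₀) * x
            = algebraMap Fq Fqm ω * x + algebraMap Fq Fqm s * (b * x) := by
          rw [map_add, map_mul, hb]; ring
        rw [e3, map_add (Algebra.trace Fq Fqm), hTmul, Algebra.smul_def, hTmul]
      simp_rw [hterm]
      rw [aux_charsum hχne]
      by_cases hω : ω = -(s * b₀)
      · rw [if_pos (show algebraMap Fq Fqm (ω + s * b₀) = 0 by
          rw [hω, neg_add_cancel, map_zero]), if_pos hω, hcard]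
      · rw [if_neg hω,
          if_neg (fun h => hω (eq_neg_of_add_eq_zero_left ((map_eq_zero _).mp h)))]
    have hω₀mem : -(s * b₀) ∈ Finset.univ.filter (fun ω : Fq => ω ≠ 0) := by
      simp only [Finset.mem_filter, Finset.mem_univ, true_and]
      exact neg_ne_zero.mpr (mul_ne_zero hs hb₀)
    rw [Finset.sum_eq_single_of_mem (-(s * b₀)) hω₀mem (fun ω _ hne => by
      rw [hfact, hX, if_neg hne, zero_mul])]
    rw [hfact, hX, if_pos rfl]
    set ω₀ : Fq := -(s * b₀) with hω₀
    set α : Fqm := algebraMap Fq Fqm ω₀ with hα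
    have hω₀ne : ω₀ ≠ 0 := neg_ne_zero.mpr (mul_ne_zero hs hb₀)
    have hαne : α ≠ 0 := (map_ne_zero _).mpr hω₀ne
    have hαsq : IsSquare α := aux_square q m hq1 hodd hme hm Fq Fqm hq_card hqm_card hch ω₀ hω₀ne
    have hαval : α = -(s' * b) := by rw [hα, hω₀, map_neg, map_mul, ← hs', ← hb]
    have hY : (∑ y : Fqm, ψ (ω₀ * Algebra.trace Fq Fqm (y ^ 2)) *
          ψ (Algebra.trace Fq Fqm (s • (c * y))))
        = ψ (s * B) * G := by
      have e4 : ∀ y : Fqm, ψ (ω₀ * Algebra.trace Fq Fqm (y ^ 2)) *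
          ψ (Algebra.trace Fq Fqm (s • (c * y)))
          = χ (α * (y + s' * c / (2 * α)) ^ 2) * ψ (s * B) := by
        intro y
        have h1 : ψ (ω₀ * Algebra.trace Fq Fqm (y ^ 2)) = χ (α * y ^ 2) := by
          rw [hχapp, hα, hTmul]
        have h2 : ψ (Algebra.trace Fq Fqm (s • (c * y))) = χ (s' * (c * y)) := by
          rw [hχapp, Algebra.smul_def, ← hs']
        have h3 : ψ (s * B) = χ (s' * (c ^ 2 / (4 * b))) := by
          rw [hχapp, hs', hTmul, hB]
        rw [h1, h2, h3, ← AddChar.map_add_eq_mul, ← AddChar.map_add_eq_mul]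
        congr 1
        rw [hαval]
        field_simp
        ring
      simp_rw [e4]
      rw [← Finset.sum_mul]
      have h5 : ∑ y : Fqm, χ (α * (y + s' * c / (2 * α)) ^ 2)
          = ∑ y : Fqm, χ (α * y ^ 2) :=
        Equiv.sum_comp (Equiv.addRight (s' * c / (2 * α))) (fun y => χ (α * y ^ 2))
      rw [h5, aux_gauss hch hχne hαne hαsq]
      rw [hG]
      rw [mul_comm]
      congr 1
    rw [hY]
    have hZ : (∑ z : Fqm, ψ (ω₀ * Algebra.norm Fq z) *
          ψ (Algebra.trace Fq Fqm (s • (d * z))))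
        = ∑ z : Fqm, ψ ((-(s * b₀)) * Algebra.norm Fq z) *
            ψ (s * Algebra.trace Fq Fqm (d * z)) := by
      refine Finset.sum_congr rfl fun z _ => ?_
      rw [hω₀]
      congr 2
      rw [Algebra.smul_def, hTmul]
    rw [hZ]
  calc ∑ s ∈ Finset.univ.filter (fun s : Fq => s ≠ 0),
        ψ (s * a) *
          ∑ ω ∈ Finset.univ.filter (fun ω : Fq => ω ≠ 0),
            ∑ p : Fqm × Fqm × Fqm,
              ψ (ω * (Algebra.trace Fq Fqm p.1 + Algebra.trace Fq Fqm (p.2.1 ^ 2) +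
                  Algebra.norm Fq p.2.2)) *
                ψ (Algebra.trace Fq Fqm (s • (b * p.1 + c * p.2.1 + d * p.2.2)))
      = ∑ s ∈ Finset.univ.filter (fun s : Fq => s ≠ 0),
        ψ (s * a) * ((q : ℂ) ^ m * (ψ (s * B) * G *
          ∑ z : Fqm, ψ ((-(s * b₀)) * Algebra.norm Fq z) *
            ψ (s * Algebra.trace Fq Fqm (d * z)))) := by
        refine Finset.sum_congr rfl fun s hs => ?_
        rw [key s (Finset.mem_filter.mp hs).2]
    _ = G * (q : ℂ) ^ m *
        ∑ s ∈ Finset.univ.filter (fun s : Fq => s ≠ 0),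
          ∑ z : Fqm,
            ψ (s * (a + B + Algebra.trace Fq Fqm (d * z) - b₀ * Algebra.norm Fq z)) := by
        rw [Finset.mul_sum]
        refine Finset.sum_congr rfl fun s hs => ?_
        have e5 : ∀ z : Fqm,
            ψ (s * (a + B + Algebra.trace Fq Fqm (d * z) - b₀ * Algebra.norm Fq z))
            = ψ (s * a) * ψ (s * B) *
              (ψ ((-(s * b₀)) * Algebra.norm Fq z) * ψ (s * Algebra.trace Fq Fqm (d * z))) := by
          intro z
          have e6 : s * (a + B + Algebra.trace Fq Fqm (d * z) - b₀ * Algebra.norm Fq z)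
              = s * a + (s * B + ((-(s * b₀)) * Algebra.norm Fq z +
                s * Algebra.trace Fq Fqm (d * z))) := by ring
          rw [e6, ψ.map_add_eq_mul, ψ.map_add_eq_mul, ψ.map_add_eq_mul]
          ring
        simp_rw [e5]
        rw [← Finset.mul_sum]
        ring
end

section
/- Let m ≥ 2 be even, let Tr : F_{2^m} → F_2 denote the absolute trace, and let B : F_{2^m} → F_2 be a bent function, i.e. (Σ_{z ∈ F_{2^m}} (−1)^{B(z) + Tr(dz)})² = 2^m for every d ∈ F_{2^m}, where (−1)^t ∈ ℤ is 1 if t = 0 and −1 if t = 1. Then the number of pairs (a, d) ∈ F_2 × F_{2^m} such that #{(x,y,z) ∈ F_{2^m}³ : Tr(x) + Tr(y²) + B(z) = 0 and a + Tr(x + y + dz) = 1} = 2^{3m-2} − 2^{(5m-4)/2} equals 2^m. -/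
def sgn (t : ZMod 2) : ℤ := if t = 0 then 1 else -1

lemma sgn_add (u v : ZMod 2) : sgn (u + v) = sgn u * sgn v := by revert u v; decide

lemma sgn_sq (u : ZMod 2) : sgn u * sgn u = 1 := by revert u; decide

lemma indicator_eq (u v : ZMod 2) :
    (if u = 0 ∧ v = 1 then (4:ℤ) else 0) = (1 + sgn u) * (1 - sgn v) := by
  revert u v; decide

lemma sum3 {K : Type} [Fintype K] (A C D : K → ℤ) :
    ∑ p : K × K × K, A p.1 * C p.2.1 * D p.2.2
      = (∑ x, A x) * (∑ x, C x) * (∑ x, D x) := by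
  simp only [Fintype.sum_prod_type, ← Finset.sum_mul, ← Finset.mul_sum, mul_assoc]

lemma sum3' {K : Type} [Fintype K] (f g h f' g' h' f'' g'' h'' f''' g''' h''' : K → ℤ) :
    ∑ p : K × K × K, (f p.1 * g p.2.1 * h p.2.2 + f' p.1 * g' p.2.1 * h' p.2.2
        - f'' p.1 * g'' p.2.1 * h'' p.2.2 - f''' p.1 * g''' p.2.1 * h''' p.2.2)
      = (∑ x, f x) * (∑ x, g x) * (∑ x, h x) + (∑ x, f' x) * (∑ x, g' x) * (∑ x, h' x)
        - (∑ x, f'' x) * (∑ x, g'' x) * (∑ x, h'' x)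
        - (∑ x, f''' x) * (∑ x, g''' x) * (∑ x, h''' x) := by
  simp only [Finset.sum_sub_distrib, Finset.sum_add_distrib]
  rw [sum3 f g h, sum3 f' g' h', sum3 f'' g'' h'', sum3 f''' g''' h''']

lemma trace_facts (K : Type) [Field K] [Fintype K] [Algebra (ZMod 2) K] :
    (∑ x : K, sgn (Algebra.trace (ZMod 2) K x) = 0)
      ∧ (∀ y : K, Algebra.trace (ZMod 2) K (y ^ 2) = Algebra.trace (ZMod 2) K y) := by
  haveI hfin : Module.Finite (ZMod 2) K := Module.finite_iff_finite.mpr inferInstance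
  have hsurj : Function.Surjective (Algebra.trace (ZMod 2) K) :=
    Algebra.trace_surjective (ZMod 2) K
  constructor
  · obtain ⟨c, hc⟩ := hsurj 1
    have h1 : ∑ x : K, sgn (Algebra.trace (ZMod 2) K (x + c))
        = ∑ x : K, sgn (Algebra.trace (ZMod 2) K x) :=
      (Fintype.sum_equiv (Equiv.addRight c) _ _ (fun x => rfl))
    have h2 : ∀ x : K, sgn (Algebra.trace (ZMod 2) K (x + c))
        = - sgn (Algebra.trace (ZMod 2) K x) := by
      intro x
      rw [map_add, hc, sgn_add]
      have h3 : sgn 1 = -1 := by decide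
      rw [h3]; ring
    simp only [h2, Finset.sum_neg_distrib] at h1
    omega
  · haveI : Fact (Nat.Prime 2) := ⟨by norm_num⟩
    haveI hch : CharP K 2 := charP_of_injective_algebraMap (algebraMap (ZMod 2) K).injective 2
    have hr2 : ∀ r : ZMod 2, r ^ 2 = r := by intro r; fin_cases r <;> rfl
    set e : K ≃ₐ[ZMod 2] K := AlgEquiv.ofRingEquiv (f := frobeniusEquiv K 2)
      (fun r => by
        show (algebraMap (ZMod 2) K r) ^ 2 = algebraMap (ZMod 2) K r
        rw [← map_pow, hr2]) with he
    intro y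
    have h4 : (y : K) ^ 2 = e y := rfl
    rw [h4, Algebra.trace_eq_of_algEquiv]

/-- Multiplicity of the minimum weight in Theorem 4.7: for `B` bent, the
number of pairs `(a,d)` whose associated codeword of the punctured binary subfield code has
weight `2^{3m-2} − 2^{(5m-4)/2}` is `2^m`. -/
theorem stmt_7 (m : ℕ) (hm : 2 ≤ m) (hme : Even m)
    (K : Type) [Field K] [Fintype K] [Algebra (ZMod 2) K]
    (hcard : Fintype.card K = 2 ^ m)
    (B : K → ZMod 2)
    (hB : ∀ d : K,
      (∑ z : K, sgn (B z + Algebra.trace (ZMod 2) K (d * z))) ^ 2 = 2 ^ m) :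
    {ad : ZMod 2 × K |
        {p : K × K × K |
            Algebra.trace (ZMod 2) K p.1 + Algebra.trace (ZMod 2) K (p.2.1 ^ 2) +
              B p.2.2 = 0 ∧
            ad.1 + Algebra.trace (ZMod 2) K (p.1 + p.2.1 + ad.2 * p.2.2) = 1}.ncard =
          2 ^ (3 * m - 2) - 2 ^ ((5 * m - 4) / 2)}.ncard = 2 ^ m := by
  classical
  obtain ⟨hsum0, htr2⟩ := trace_facts K
  obtain ⟨k, hk⟩ := hme
  have hk1 : 1 ≤ k := by omega
  set T : K → ℤ := fun d => ∑ z : K, sgn (B z + Algebra.trace (ZMod 2) K (d * z)) with hT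
  -- the two possible values of T d
  have hTd : ∀ d : K, T d = 2 ^ k ∨ T d = -(2 ^ k) := by
    intro d
    have h := hB d
    have hmm : (2:ℤ) ^ m = 2 ^ k * 2 ^ k := by rw [hk, pow_add]
    have h2 : (T d - 2 ^ k) * (T d + 2 ^ k) = 0 := by
      linear_combination h + hmm
    rcases mul_eq_zero.mp h2 with h3 | h3
    · left; linarith
    · right; linarith
  have hone : ∑ _x : K, (1:ℤ) = 2 ^ m := by
    simp [Finset.sum_const, hcard]
  -- the key character-sum formula
  have h4N : ∀ (a : ZMod 2) (d : K),
      (4:ℤ) * (({p : K × K × K |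
          Algebra.trace (ZMod 2) K p.1 + Algebra.trace (ZMod 2) K (p.2.1 ^ 2) + B p.2.2 = 0 ∧
          a + Algebra.trace (ZMod 2) K (p.1 + p.2.1 + d * p.2.2) = 1}.ncard : ℤ))
        = 2 ^ (3 * m) - 2 ^ (2 * m) * (sgn a * T d) := by
    intro a d
    have hset : {p : K × K × K |
          Algebra.trace (ZMod 2) K p.1 + Algebra.trace (ZMod 2) K (p.2.1 ^ 2) + B p.2.2 = 0 ∧
          a + Algebra.trace (ZMod 2) K (p.1 + p.2.1 + d * p.2.2) = 1}
        = ↑(Finset.univ.filter (fun p : K × K × K =>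
          Algebra.trace (ZMod 2) K p.1 + Algebra.trace (ZMod 2) K (p.2.1 ^ 2) + B p.2.2 = 0 ∧
          a + Algebra.trace (ZMod 2) K (p.1 + p.2.1 + d * p.2.2) = 1)) := by
      ext p; simp
    rw [hset, Set.ncard_coe_finset, Finset.card_filter]
    push_cast
    rw [Finset.mul_sum]
    simp only [mul_ite, mul_one, mul_zero, indicator_eq]
    have hpt : ∀ x y z : K,
        (1 + sgn (Algebra.trace (ZMod 2) K x + Algebra.trace (ZMod 2) K (y ^ 2) + B z)) *
          (1 - sgn (a + Algebra.trace (ZMod 2) K (x + y + d * z)))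
        = (1:ℤ) * 1 * 1
          + sgn (Algebra.trace (ZMod 2) K x) * sgn (Algebra.trace (ZMod 2) K y) * sgn (B z)
          - sgn (Algebra.trace (ZMod 2) K x) * sgn (Algebra.trace (ZMod 2) K y) *
              (sgn a * sgn (Algebra.trace (ZMod 2) K (d * z)))
          - (1:ℤ) * 1 * (sgn a * sgn (B z + Algebra.trace (ZMod 2) K (d * z))) := by
      intro x y z
      have e1 : sgn (Algebra.trace (ZMod 2) K x + Algebra.trace (ZMod 2) K (y ^ 2) + B z)
          = sgn (Algebra.trace (ZMod 2) K x) * sgn (Algebra.trace (ZMod 2) K y) * sgn (B z) := by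
        rw [sgn_add, sgn_add, htr2]
      have e2 : sgn (a + Algebra.trace (ZMod 2) K (x + y + d * z))
          = sgn a * (sgn (Algebra.trace (ZMod 2) K x) * sgn (Algebra.trace (ZMod 2) K y) *
              sgn (Algebra.trace (ZMod 2) K (d * z))) := by
        rw [map_add, map_add, sgn_add, sgn_add, sgn_add]
      have e3 : sgn (B z + Algebra.trace (ZMod 2) K (d * z))
          = sgn (B z) * sgn (Algebra.trace (ZMod 2) K (d * z)) := by rw [sgn_add]
      rw [e1, e2, e3]
      have hx := sgn_sq (Algebra.trace (ZMod 2) K x)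
      have hy := sgn_sq (Algebra.trace (ZMod 2) K y)
      linear_combination
        (-(sgn a * sgn (B z) * sgn (Algebra.trace (ZMod 2) K (d * z)))
            * (sgn (Algebra.trace (ZMod 2) K y) * sgn (Algebra.trace (ZMod 2) K y))) * hx
          + (-(sgn a * sgn (B z) * sgn (Algebra.trace (ZMod 2) K (d * z)))) * hy
    refine (Finset.sum_congr rfl fun p _ => hpt p.1 p.2.1 p.2.2).trans ?_
    refine (sum3' (fun _ => (1:ℤ)) (fun _ => (1:ℤ)) (fun _ => (1:ℤ))
        (fun x => sgn (Algebra.trace (ZMod 2) K x)) (fun y => sgn (Algebra.trace (ZMod 2) K y))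
        (fun z => sgn (B z))
        (fun x => sgn (Algebra.trace (ZMod 2) K x)) (fun y => sgn (Algebra.trace (ZMod 2) K y))
        (fun z => sgn a * sgn (Algebra.trace (ZMod 2) K (d * z)))
        (fun _ => (1:ℤ)) (fun _ => (1:ℤ))
        (fun z => sgn a * sgn (B z + Algebra.trace (ZMod 2) K (d * z)))).trans ?_
    rw [hsum0, hone]
    have hTsum : ∑ z : K, sgn a * sgn (B z + Algebra.trace (ZMod 2) K (d * z))
        = sgn a * T d := by rw [hT, ← Finset.mul_sum]
    rw [hTsum]
    have hp3 : (2:ℤ) ^ (3 * m) = 2 ^ m * 2 ^ m * 2 ^ m := by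
      rw [show 3 * m = m + m + m by ring, pow_add, pow_add]
    have hp2 : (2:ℤ) ^ (2 * m) = 2 ^ m * 2 ^ m := by rw [two_mul, pow_add]
    rw [hp3, hp2]; ring
  -- equivalence with the sign condition
  have hiff : ∀ ad : ZMod 2 × K,
      ({p : K × K × K |
          Algebra.trace (ZMod 2) K p.1 + Algebra.trace (ZMod 2) K (p.2.1 ^ 2) + B p.2.2 = 0 ∧
          ad.1 + Algebra.trace (ZMod 2) K (p.1 + p.2.1 + ad.2 * p.2.2) = 1}.ncard =
        2 ^ (3 * m - 2) - 2 ^ ((5 * m - 4) / 2))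
        ↔ sgn ad.1 * T ad.2 = 2 ^ k := by
    rintro ⟨a, d⟩
    have h := h4N a d
    have p1 : 3 * m - 2 = 6 * k - 2 := by omega
    have p2 : (5 * m - 4) / 2 = 5 * k - 2 := by omega
    have p3 : 3 * m = 6 * k := by omega
    have p4 : 2 * m = 4 * k := by omega
    rw [p3, p4] at h
    have q1 : (2:ℤ) ^ (6 * k) = 4 * 2 ^ (6 * k - 2) := by
      rw [show 6 * k = 2 + (6 * k - 2) by omega, pow_add]; norm_num
    have q2 : (2:ℤ) ^ (5 * k) = 4 * 2 ^ (5 * k - 2) := by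
      rw [show 5 * k = 2 + (5 * k - 2) by omega, pow_add]; norm_num
    have q3 : (2:ℤ) ^ (5 * k) = 2 ^ (4 * k) * 2 ^ k := by
      rw [← pow_add]; congr 1; omega
    have hle : (2:ℕ) ^ (5 * k - 2) ≤ 2 ^ (6 * k - 2) :=
      Nat.pow_le_pow_right (by norm_num) (by omega)
    have hcast : ((2 ^ (3 * m - 2) - 2 ^ ((5 * m - 4) / 2) : ℕ) : ℤ)
        = 2 ^ (6 * k - 2) - 2 ^ (5 * k - 2) := by
      rw [p1, p2, Nat.cast_sub hle]; push_cast; ring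
    constructor
    · intro hN
      rw [hN, hcast] at h
      have h5 : (2:ℤ) ^ (4 * k) * (sgn a * T d) = 2 ^ (4 * k) * 2 ^ k := by
        linear_combination h + q1 - q2 + q3
      exact mul_left_cancel₀ (pow_ne_zero _ (by norm_num : (2:ℤ) ≠ 0)) h5
    · intro hs
      rw [hs] at h
      have h5 : (4:ℤ) * (({p : K × K × K |
          Algebra.trace (ZMod 2) K p.1 + Algebra.trace (ZMod 2) K (p.2.1 ^ 2) + B p.2.2 = 0 ∧
          a + Algebra.trace (ZMod 2) K (p.1 + p.2.1 + d * p.2.2) = 1}.ncard : ℤ))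
          = 4 * ((2 ^ (3 * m - 2) - 2 ^ ((5 * m - 4) / 2) : ℕ) : ℤ) := by
        rw [hcast]
        linear_combination h + q1 - q2 + q3
      have h6 := mul_left_cancel₀ (by norm_num : (4:ℤ) ≠ 0) h5
      exact_mod_cast h6
  -- rewrite the outer set and count it
  have hsetEq : {ad : ZMod 2 × K |
        {p : K × K × K |
            Algebra.trace (ZMod 2) K p.1 + Algebra.trace (ZMod 2) K (p.2.1 ^ 2) +
              B p.2.2 = 0 ∧
            ad.1 + Algebra.trace (ZMod 2) K (p.1 + p.2.1 + ad.2 * p.2.2) = 1}.ncard =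
          2 ^ (3 * m - 2) - 2 ^ ((5 * m - 4) / 2)}
      = {ad : ZMod 2 × K | sgn ad.1 * T ad.2 = 2 ^ k} := Set.ext fun ad => hiff ad
  rw [hsetEq]
  have hzk : (0:ℤ) < 2 ^ k := by positivity
  have hdec1 : ∀ b : ZMod 2, sgn b = 1 → b = 0 := by decide
  have hdec2 : ∀ b : ZMod 2, sgn b = -1 → b = 1 := by decide
  have himg : {ad : ZMod 2 × K | sgn ad.1 * T ad.2 = 2 ^ k}
      = (fun d : K => ((if T d = 2 ^ k then (0:ZMod 2) else 1), d)) '' Set.univ := by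
    ext ⟨a, d⟩
    simp only [Set.image_univ, Set.mem_range, Set.mem_setOf_eq]
    constructor
    · intro hsa
      refine ⟨d, ?_⟩
      show ((if T d = 2 ^ k then (0:ZMod 2) else 1), d) = (a, d)
      rcases hTd d with h1 | h1
      · rw [h1] at hsa
        have hsga : sgn a = 1 :=
          mul_right_cancel₀ (ne_of_gt hzk) (by linear_combination hsa :
            sgn a * 2 ^ k = 1 * 2 ^ k)
        have ha : a = 0 := hdec1 a hsga
        rw [if_pos h1, ha]
      · rw [h1] at hsa
        have hsga : sgn a = -1 :=
          mul_right_cancel₀ (neg_ne_zero.mpr (ne_of_gt hzk))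
            (by linear_combination hsa : sgn a * -(2 ^ k) = -1 * -(2 ^ k))
        have ha : a = 1 := hdec2 a hsga
        have hne : T d ≠ 2 ^ k := by rw [h1]; intro hc; linarith
        rw [if_neg hne, ha]
    · rintro ⟨d', hd'⟩
      have h2 : d' = d := congrArg Prod.snd hd'
      subst h2
      have h1 : (if T d' = 2 ^ k then (0:ZMod 2) else 1) = a := congrArg Prod.fst hd'
      rw [← h1]
      rcases hTd d' with h3 | h3
      · rw [if_pos h3, h3]
        have : sgn 0 = 1 := by decide
        rw [this, one_mul]
      · have hne : T d' ≠ 2 ^ k := by rw [h3]; intro hc; linarith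
        rw [if_neg hne, h3]
        have : sgn 1 = -1 := by decide
        rw [this]; ring
  rw [himg]
  have hinj : Function.Injective (fun d : K => ((if T d = 2 ^ k then (0:ZMod 2) else 1), d)) :=
    fun d₁ d₂ h => congrArg Prod.snd h
  rw [Set.ncard_image_of_injective _ hinj, Set.ncard_univ, Nat.card_eq_fintype_card, hcard]
end

section
/- Let m ≥ 1 and s ≥ 0 be integers with m + s even. Let Tr : F_{2^m} → F_2 denote the absolute trace, and for t ∈ F_2 write (−1)^t ∈ ℤ for 1 if t = 0 and −1 if t = 1. Let h : F_{2^m} → F_{2^m} satisfy h(0) = 0 and be vectorial s-plateaued, i.e. for every b ∈ F_{2^m} \ {0} and every c ∈ F_{2^m}, (Σ_{y ∈ F_{2^m}} (−1)^{Tr(b·h(y) + c·y)})² ∈ {0, 2^{m+s}}. Then for every (a,b,c) ∈ F_2 × F_{2^m}², the cardinality #{y ∈ F_{2^m} : a + Tr(b·h(y) + c·y) = 1} belongs to the set {0, 2^{m-1} − 2^{(m+s-2)/2}, 2^{m-1}, 2^{m-1} + 2^{(m+s-2)/2}, 2^m}. -/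
lemma sum_sgn_eq {K : Type} [Fintype K] (t : K → ZMod 2) :
    ∑ y : K, sgn (t y) = (Fintype.card K : ℤ) - 2 * ({y | t y = 1}.ncard : ℤ) := by
  classical
  have h1 : ∀ u : ZMod 2, sgn u = 1 - 2 * (if u = 1 then (1:ℤ) else 0) := by decide
  have h2 : {y | t y = 1}.ncard = (Finset.univ.filter (fun y => t y = 1)).card := by
    rw [Set.ncard_eq_toFinset_card']
    congr 1
    ext y; simp
  simp only [h1]
  rw [Finset.sum_sub_distrib, ← Finset.mul_sum, Finset.sum_boole]
  simp [h2]

lemma ncard_zero_add {K : Type} [Fintype K] (t : K → ZMod 2) :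
    {y | t y = 0}.ncard + {y | t y = 1}.ncard = Fintype.card K := by
  have he : {y | t y = 1} = {y | t y = 0}ᶜ := by
    ext y
    simp only [Set.mem_setOf_eq, Set.mem_compl_iff]
    exact (by decide : ∀ u : ZMod 2, u = 1 ↔ ¬ u = 0) (t y)
  rw [he, Set.ncard_add_ncard_compl, Nat.card_eq_fintype_card]

/-- Few-weight property of Theorem 5.4: for `h` a normalized vectorial
`s`-plateaued function, every codeword weight lies in
`{0, 2^{m-1} − 2^{(m+s-2)/2}, 2^{m-1}, 2^{m-1} + 2^{(m+s-2)/2}, 2^m}`. -/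
theorem stmt_13 (m s : ℕ) (hm : 1 ≤ m) (hms : Even (m + s))
    (K : Type) [Field K] [Fintype K] [Algebra (ZMod 2) K]
    (hcard : Fintype.card K = 2 ^ m)
    (h : K → K) (hh0 : h 0 = 0)
    (hplat : ∀ b : K, b ≠ 0 → ∀ c : K,
      (∑ y : K, sgn (Algebra.trace (ZMod 2) K (b * h y + c * y))) ^ 2 ∈
        ({0, 2 ^ (m + s)} : Set ℤ)) :
    ∀ (a : ZMod 2) (b c : K),
      {y : K | a + Algebra.trace (ZMod 2) K (b * h y + c * y) = 1}.ncard ∈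
        ({0, 2 ^ (m - 1) - 2 ^ ((m + s - 2) / 2), 2 ^ (m - 1),
          2 ^ (m - 1) + 2 ^ ((m + s - 2) / 2), 2 ^ m} : Set ℕ) := by
  intro a b c
  haveI : CharP K 2 := charP_of_injective_algebraMap (algebraMap (ZMod 2) K).injective 2
  set T : K → ZMod 2 := fun y => Algebra.trace (ZMod 2) K (b * h y + c * y) with hT
  set N : ℕ := {y | T y = 1}.ncard with hN
  clear_value N
  -- basic powers facts
  have hA : 2 ^ m = 2 * 2 ^ (m - 1) := by
    conv_lhs => rw [show m = (m-1) + 1 by omega]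
    ring
  have hNle : N ≤ 2 ^ m := by
    rw [hN, ← hcard]
    calc {y | T y = 1}.ncard ≤ (Set.univ : Set K).ncard :=
          Set.ncard_le_ncard (Set.subset_univ _) Set.finite_univ
      _ = Fintype.card K := by rw [Set.ncard_univ, Nat.card_eq_fintype_card]
  -- key claim
  have key : N ∈ ({0, 2 ^ (m - 1) - 2 ^ ((m + s - 2) / 2), 2 ^ (m - 1),
          2 ^ (m - 1) + 2 ^ ((m + s - 2) / 2), 2 ^ m} : Set ℕ) ∧
      (2 ^ m - N) ∈ ({0, 2 ^ (m - 1) - 2 ^ ((m + s - 2) / 2), 2 ^ (m - 1),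
          2 ^ (m - 1) + 2 ^ ((m + s - 2) / 2), 2 ^ m} : Set ℕ) := by
    by_cases hb : b = 0
    · -- linear case
      have hTc : ∀ y, T y = Algebra.trace (ZMod 2) K (c * y) := by
        intro y; simp [hT, hb]
      have hTadd : ∀ y z : K, T (y + z) = T y + T z := by
        intro y z; rw [hTc, hTc, hTc, mul_add, map_add]
      by_cases hex : ∃ y0, T y0 = 1
      · obtain ⟨y0, hy0⟩ := hex
        have himg : (fun y => y + y0) '' {y | T y = 0} = {y | T y = 1} := by
          ext z
          simp only [Set.mem_image, Set.mem_setOf_eq]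
          constructor
          · rintro ⟨y, hy, rfl⟩
            rw [hTadd, hy, hy0, zero_add]
          · intro hz
            refine ⟨z + y0, ?_, ?_⟩
            · rw [hTadd, hz, hy0]; decide
            · rw [add_assoc, CharTwo.add_self_eq_zero, add_zero]
        have h0eq : {y | T y = 0}.ncard = N := by
          rw [hN, ← himg, Set.ncard_image_of_injective _ (add_left_injective y0)]
        have hsum := ncard_zero_add T
        rw [h0eq, hcard, ← hN] at hsum
        have hNval : N = 2 ^ (m - 1) := by omega
        constructor
        · simp only [Set.mem_insert_iff, Set.mem_singleton_iff]; omega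
        · simp only [Set.mem_insert_iff, Set.mem_singleton_iff]; omega
      · push_neg at hex
        have : {y | T y = 1} = ∅ := by
          ext y; simp only [Set.mem_setOf_eq, Set.mem_empty_iff_false, iff_false]
          exact hex y
        have hN0 : N = 0 := by rw [hN, this, Set.ncard_empty]
        constructor
        · simp only [Set.mem_insert_iff, Set.mem_singleton_iff]; omega
        · simp only [Set.mem_insert_iff, Set.mem_singleton_iff]; omega
    · -- plateaued case
      obtain ⟨k, hk⟩ := hms
      have hk1 : 1 ≤ k := by omega
      have hexp : (m + s - 2) / 2 = k - 1 := by omega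
      have hB : 2 ^ k = 2 * 2 ^ (k - 1) := by
        conv_lhs => rw [show k = (k-1) + 1 by omega]
        ring
      have hS := sum_sgn_eq T
      rw [hcard, ← hN] at hS
      push_cast at hS
      have hplat' := hplat b hb c
      rw [show (∑ y : K, sgn (Algebra.trace (ZMod 2) K (b * h y + c * y))) =
          ∑ y : K, sgn (T y) from rfl] at hplat'
      rw [hS] at hplat'
      simp only [Set.mem_insert_iff, Set.mem_singleton_iff] at hplat'
      have hkm : ∀ (P : Prop), 2 ^ k ≤ 2 ^ m → (k ≤ m → P) → P := by
        intro P hle hP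
        exact hP ((Nat.pow_le_pow_iff_right one_lt_two).mp hle)
      rcases hplat' with h0 | h2
      · have hS0 : ((2:ℤ) ^ m - 2 * N) = 0 := by
          exact (pow_eq_zero_iff two_ne_zero).mp h0
        have hnat : 2 ^ m = 2 * N := by
          have : (2:ℤ) ^ m = 2 * N := by linarith
          exact_mod_cast this
        constructor
        · simp only [Set.mem_insert_iff, Set.mem_singleton_iff]; omega
        · simp only [Set.mem_insert_iff, Set.mem_singleton_iff]; omega
      · rw [show m + s = k + k from hk, pow_add, ← sq] at h2
        have hfac : ((2:ℤ) ^ m - 2 * N - 2 ^ k) * ((2:ℤ) ^ m - 2 * N + 2 ^ k) = 0 := by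
          linear_combination h2
        rcases mul_eq_zero.mp hfac with hp | hn
        · -- S = 2^k : N = 2^{m-1} - 2^{k-1}
          have hnat : 2 ^ m = 2 * N + 2 ^ k := by
            have : (2:ℤ) ^ m = 2 * N + 2 ^ k := by linarith [hp]
            exact_mod_cast this
          have hkm' : 2 ^ k ≤ 2 ^ m := by omega
          have hkm2 : k ≤ m := (Nat.pow_le_pow_iff_right one_lt_two).mp hkm'
          have hBA : 2 ^ (k - 1) ≤ 2 ^ (m - 1) := Nat.pow_le_pow_right (by norm_num) (by omega)
          rw [hexp]
          constructor
          · simp only [Set.mem_insert_iff, Set.mem_singleton_iff]; omega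
          · simp only [Set.mem_insert_iff, Set.mem_singleton_iff]; omega
        · -- S = -2^k : N = 2^{m-1} + 2^{k-1}
          have hnat : 2 ^ m + 2 ^ k = 2 * N := by
            have : (2:ℤ) ^ m + 2 ^ k = 2 * N := by linarith [hn]
            exact_mod_cast this
          have hkm' : 2 ^ k ≤ 2 ^ m := by omega
          have hkm2 : k ≤ m := (Nat.pow_le_pow_iff_right one_lt_two).mp hkm'
          have hBA : 2 ^ (k - 1) ≤ 2 ^ (m - 1) := Nat.pow_le_pow_right (by norm_num) (by omega)
          rw [hexp]
          constructor
          · simp only [Set.mem_insert_iff, Set.mem_singleton_iff]; omega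
          · simp only [Set.mem_insert_iff, Set.mem_singleton_iff]; omega
  -- now case on a
  rcases (by decide : ∀ u : ZMod 2, u = 0 ∨ u = 1) a with ha | ha
  · subst ha
    have : {y : K | 0 + T y = 1} = {y | T y = 1} := by
      ext y; simp
    rw [show {y : K | 0 + Algebra.trace (ZMod 2) K (b * h y + c * y) = 1} =
        {y | T y = 1} from this]
    exact hN ▸ key.1
  · subst ha
    have hset : {y : K | 1 + T y = 1} = {y | T y = 0} := by
      ext y
      simp only [Set.mem_setOf_eq]
      exact (by decide : ∀ u : ZMod 2, 1 + u = 1 ↔ u = 0) (T y)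
    rw [show {y : K | 1 + Algebra.trace (ZMod 2) K (b * h y + c * y) = 1} =
        {y | T y = 0} from hset]
    have hsum := ncard_zero_add T
    rw [hcard, ← hN] at hsum
    have : {y | T y = 0}.ncard = 2 ^ m - N := by omega
    rw [this]
    exact key.2
end

section
/- Let m ≥ 1 and s ≥ 0 be integers with s ≤ m, m + s even, and m + s ≥ 6. Let Tr : F_{2^m} → F_2 denote the absolute trace, and for t ∈ F_2 write (−1)^t ∈ ℤ for 1 if t = 0 and −1 if t = 1. Let h : F_{2^m} → F_{2^m} satisfy h(0) = 0 and be vectorial s-plateaued, i.e. for every b ∈ F_{2^m} \ {0} and every c ∈ F_{2^m}, (Σ_{y ∈ F_{2^m}} (−1)^{Tr(b·h(y) + c·y)})² ∈ {0, 2^{m+s}}. Then for every (a,b,c) ∈ F_2 × F_{2^m}², the cardinality #{y ∈ F_{2^m} : a + Tr(b·h(y) + c·y) = 1} is divisible by 4. -/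
section Aux

variable {K : Type} [Fintype K]

private lemma aux_sum_sgn (T : K → ZMod 2) :
    ∑ y : K, sgn (T y) =
      ((Finset.univ.filter fun y => T y = 0).card : ℤ)
        - (Finset.univ.filter fun y => T y = 1).card := by
  have hsplit : ∑ y : K, sgn (T y)
      = ∑ y ∈ Finset.univ.filter (fun y => T y = 0), (1 : ℤ)
        + ∑ y ∈ Finset.univ.filter (fun y => ¬ T y = 0), (-1 : ℤ) := by
    rw [← Finset.sum_ite (fun y => (1:ℤ)) (fun y => (-1:ℤ))]
    rfl
  have h1 : (Finset.univ.filter fun y : K => ¬ T y = 0)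
      = Finset.univ.filter fun y => T y = 1 := by
    apply Finset.filter_congr
    intro y _
    have : ∀ x : ZMod 2, (¬ x = 0) ↔ x = 1 := by decide
    simp [this]
  rw [hsplit, h1, Finset.sum_const, Finset.sum_const]
  ring

private lemma aux_card_partition (T : K → ZMod 2) :
    (Finset.univ.filter fun y : K => T y = 0).card
      + (Finset.univ.filter fun y => T y = 1).card = Fintype.card K := by
  have hpc := Finset.card_filter_add_card_filter_not
    (s := (Finset.univ : Finset K)) (p := fun y => T y = 0)
  have h1 : (Finset.univ.filter fun y : K => ¬ T y = 0)
      = Finset.univ.filter fun y => T y = 1 := by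
    apply Finset.filter_congr
    intro y _
    have : ∀ x : ZMod 2, (¬ x = 0) ↔ x = 1 := by decide
    simp [this]
  rw [h1, Finset.card_univ] at hpc
  exact hpc

end Aux

/-- Doubly-even property of Theorem 5.4: for `h` a normalized vectorial
`s`-plateaued function with `m + s ≥ 6`, every codeword weight is divisible by `4`. -/
theorem stmt_14 (m s : ℕ) (hm : 1 ≤ m) (hsm : s ≤ m) (hms : Even (m + s))
    (hms6 : 6 ≤ m + s)
    (K : Type) [Field K] [Fintype K] [Algebra (ZMod 2) K]
    (hcard : Fintype.card K = 2 ^ m)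
    (h : K → K) (hh0 : h 0 = 0)
    (hplat : ∀ b : K, b ≠ 0 → ∀ c : K,
      (∑ y : K, sgn (Algebra.trace (ZMod 2) K (b * h y + c * y))) ^ 2 ∈
        ({0, 2 ^ (m + s)} : Set ℤ)) :
    ∀ (a : ZMod 2) (b c : K),
      4 ∣ {y : K | a + Algebra.trace (ZMod 2) K (b * h y + c * y) = 1}.ncard := by
  classical
  haveI : CharP K 2 := charP_of_injective_algebraMap (algebraMap (ZMod 2) K).injective 2
  intro a b c
  have hm3 : 3 ≤ m := by omega
  set T : K → ZMod 2 := fun y => Algebra.trace (ZMod 2) K (b * h y + c * y) with hT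
  set N : ZMod 2 → ℕ := fun t => (Finset.univ.filter fun y => T y = t).card with hN
  -- the set's cardinality is `N (1 + a)`
  have hset : {y : K | a + T y = 1}.ncard = N (1 + a) := by
    rw [Set.ncard_eq_toFinset_card', Set.toFinset_setOf]
    congr 1
    apply Finset.filter_congr
    intro y _
    have : ∀ a x : ZMod 2, (a + x = 1) ↔ (x = 1 + a) := by decide
    simp [this]
  rw [hset]
  -- reduce to divisibility of both `N 0` and `N 1`
  suffices hd : 4 ∣ N 0 ∧ 4 ∣ N 1 by
    rcases (show ∀ u : ZMod 2, u = 0 ∨ u = 1 by decide) (1 + a) with h1 | h1 <;> rw [h1]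
    · exact hd.1
    · exact hd.2
  have hpart : N 0 + N 1 = 2 ^ m := by
    rw [hN, ← hcard]; exact aux_card_partition T
  have hsum : ∑ y : K, sgn (T y) = (N 0 : ℤ) - N 1 := aux_sum_sgn T
  by_cases hb : b = 0
  · by_cases hc : c = 0
    · -- T is identically 0
      have hT0 : ∀ y, T y = 0 := by
        intro y; simp [hT, hb, hc]
      have hN1 : N 1 = 0 := by
        rw [hN]
        simp only [Finset.card_eq_zero, Finset.filter_eq_empty_iff]
        intro y _
        rw [hT0 y]; decide
      have hN0 : N 0 = 2 ^ m := by omega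
      constructor
      · rw [hN0]
        exact ⟨2 ^ (m - 2), by rw [show (4:ℕ) = 2^2 by norm_num, ← pow_add]; congr 1; omega⟩
      · simp [hN1]
    · -- T y = Tr (c * y), balanced
      have hex : ∃ x : K, Algebra.trace (ZMod 2) K (c * x) ≠ 0 := by
        have htr := (traceForm_nondegenerate (ZMod 2) K).1 c
        simp_rw [Algebra.traceForm_apply] at htr
        by_contra! hf
        exact hc (htr hf)
      obtain ⟨x, hx⟩ := hex
      -- hx : Algebra.trace (ZMod 2) K (c * x) ≠ 0
      have hx1 : Algebra.trace (ZMod 2) K (c * x) = 1 := by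
        have : ∀ u : ZMod 2, u ≠ 0 → u = 1 := by decide
        exact this _ hx
      have hbij : ∀ t, N t = N (t + 1) := by
        intro t
        rw [hN]
        apply Finset.card_bij' (fun y _ => y + x) (fun y _ => y + x)
        · intro y hy
          simp only [Finset.mem_filter, Finset.mem_univ, true_and] at hy ⊢
          have : T (y + x) = T y + 1 := by
            simp only [hT, hb, zero_mul, zero_add]
            rw [mul_add, map_add, hx1]
          rw [this, hy]
        · intro y hy
          simp only [Finset.mem_filter, Finset.mem_univ, true_and] at hy ⊢
          have : T (y + x) = T y + 1 := by
            simp only [hT, hb, zero_mul, zero_add]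
            rw [mul_add, map_add, hx1]
          rw [this, hy]
          have : ∀ t : ZMod 2, t + 1 + 1 = t := by decide
          exact this t
        · intro y _; rw [add_assoc]; simp [CharTwo.add_self_eq_zero]
        · intro y _; rw [add_assoc]; simp [CharTwo.add_self_eq_zero]
      have h01 : N 0 = N 1 := by simpa using hbij 0
      have h8 : 8 ∣ 2 ^ m := ⟨2 ^ (m - 3), by rw [show (8:ℕ) = 2^3 by norm_num, ← pow_add]; congr 1; omega⟩
      constructor <;> omega
  · -- b ≠ 0 : plateaued case
    have hW := hplat b hb c
    set W : ℤ := ∑ y : K, sgn (T y) with hWdef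
    set k : ℕ := (m + s) / 2 with hk
    have hk3 : 3 ≤ k := by omega
    have hmk : m + s = 2 * k := by
      obtain ⟨r, hr⟩ := hms; omega
    have hWcases : W = 0 ∨ W = 2 ^ k ∨ W = -(2 ^ k) := by
      rcases hW with h0 | h0
      · left
        exact pow_eq_zero_iff (n := 2) (by norm_num) |>.mp h0
      · right
        have h2 : (W - 2 ^ k) * (W + 2 ^ k) = 0 := by
          have : W ^ 2 = (2 ^ k) ^ 2 := by
            rw [h0, ← pow_mul]; congr 1; omega
          linear_combination this
        rcases mul_eq_zero.mp h2 with h3 | h3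
        · left; linarith
        · right; linarith
    have h8W : (8 : ℤ) ∣ W := by
      rcases hWcases with h0 | h0 | h0 <;> rw [h0]
      · exact dvd_zero 8
      · exact ⟨2 ^ (k - 3), by rw [show (8:ℤ) = 2^3 by norm_num, ← pow_add]; congr 1; omega⟩
      · exact (dvd_neg).mpr ⟨2 ^ (k - 3), by rw [show (8:ℤ) = 2^3 by norm_num, ← pow_add]; congr 1; omega⟩
    have h8m : (8 : ℤ) ∣ 2 ^ m := ⟨2 ^ (m - 3), by rw [show (8:ℤ) = 2^3 by norm_num, ← pow_add]; congr 1; omega⟩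
    have hdiff : (N 0 : ℤ) - N 1 = W := hsum.symm
    have hsum' : (N 0 : ℤ) + N 1 = 2 ^ m := by exact_mod_cast congrArg (Nat.cast : ℕ → ℤ) hpart
    constructor <;> omega
end

section
/- Let n ≥ 1, m ≥ 1, and s ≥ 0 be integers with s ≤ n, n + s even, and n + s ≥ 6. Let Tr₁ : F_{2^n} → F_2 and Tr₂ : F_{2^m} → F_2 denote the absolute trace maps, and for t ∈ F_2 write (−1)^t ∈ ℤ for 1 if t = 0 and −1 if t = 1. Let F : F_{2^n} → F_{2^m} be vectorial s-plateaued, i.e. for every a ∈ F_{2^m} \ {0} and every λ ∈ F_{2^n}, (Σ_{x ∈ F_{2^n}} (−1)^{Tr₂(a·F(x)) + Tr₁(λ·x)})² ∈ {0, 2^{n+s}}. Then for every a ∈ F_{2^m}, the cardinality #{x ∈ F_{2^n} : Tr₂(a·F(x)) = 1} is divisible by 4. -/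
/-- Corollary 6.1: for `F : F_{2^n} → F_{2^m}` a vectorial `s`-plateaued
function with `n + s ≥ 6`, all codeword weights of the code `C_F` are divisible by `4`
(`C_F` is doubly even, so the CSS code `(C_F, C_F^⊥)` is a CSS_T quantum code). -/
theorem stmt_17 (n m s : ℕ) (hn : 1 ≤ n) (hm : 1 ≤ m) (hsn : s ≤ n)
    (hns : Even (n + s)) (hns6 : 6 ≤ n + s)
    (K L : Type) [Field K] [Fintype K] [Algebra (ZMod 2) K]
    [Field L] [Fintype L] [Algebra (ZMod 2) L]
    (hK : Fintype.card K = 2 ^ n) (hL : Fintype.card L = 2 ^ m)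
    (F : K → L)
    (hF : ∀ a : L, a ≠ 0 → ∀ lam : K,
      (∑ x : K, sgn (Algebra.trace (ZMod 2) L (a * F x) +
          Algebra.trace (ZMod 2) K (lam * x))) ^ 2 ∈
        ({0, 2 ^ (n + s)} : Set ℤ)) :
    ∀ a : L, 4 ∣ {x : K | Algebra.trace (ZMod 2) L (a * F x) = 1}.ncard := by
  classical
  intro a
  set t : K → ZMod 2 := fun x => Algebra.trace (ZMod 2) L (a * F x) with ht
  have hn3 : 3 ≤ n := by omega
  set N : ℕ := (Finset.univ.filter (fun x : K => t x = 1)).card with hN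
  have hset : {x : K | Algebra.trace (ZMod 2) L (a * F x) = 1}.ncard = N := by
    rw [Set.ncard_eq_toFinset_card']
    simp [hN, ht, Set.toFinset_setOf]
  rw [hset]
  set W : ℤ := ∑ x : K, sgn (t x) with hW
  have hsgn : ∀ v : ZMod 2, sgn v = 1 - 2 * (if v = 1 then (1:ℤ) else 0) := by decide
  have hsum : W = 2 ^ n - 2 * N := by
    rw [hW]
    simp only [hsgn]
    rw [Finset.sum_sub_distrib, Finset.sum_const, ← Finset.mul_sum, Finset.sum_boole]
    simp [hK, hN]
  -- 8 divides W
  have h8W : (8:ℤ) ∣ W := by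
    rcases eq_or_ne a 0 with rfl | ha
    · have : W = 2 ^ n := by
        rw [hW]
        have : ∀ x : K, sgn (t x) = 1 := by
          intro x; simp [ht, sgn]
        simp only [this]
        simp [hK]
      rw [this]
      exact dvd_pow_self 2 (by omega : n ≠ 0) |>.trans (dvd_refl _) |> fun _ =>
        ⟨2 ^ (n - 3), by rw [show (8:ℤ) = 2 ^ 3 by norm_num, ← pow_add]; congr 1; omega⟩
    · have h := hF a ha 0
      have hz : ∀ x : K, Algebra.trace (ZMod 2) K ((0:K) * x) = 0 := by
        intro x; simp
      simp only [hz, add_zero] at h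
      replace h : W ^ 2 ∈ ({0, 2 ^ (n + s)} : Set ℤ) := h
      rcases h with h | h
      · have : W = 0 := by
          have := sq_eq_zero_iff.mp h
          exact this
        simp [this]
      · obtain ⟨k, hk⟩ := hns
        have hk3 : 3 ≤ k := by omega
        have hsq : W ^ 2 = (2 ^ k) ^ 2 := by
          rw [h, ← pow_mul]; congr 1; omega
        have : (W - 2 ^ k) * (W + 2 ^ k) = 0 := by linear_combination hsq
        rcases mul_eq_zero.mp this with h' | h'
        · have : W = 2 ^ k := by linarith
          rw [this]
          exact ⟨2 ^ (k - 3), by rw [show (8:ℤ) = 2 ^ 3 by norm_num, ← pow_add]; congr 1; omega⟩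
        · have : W = -(2 ^ k) := by linarith
          rw [this]
          exact (dvd_neg).mpr ⟨2 ^ (k - 3), by
            rw [show (8:ℤ) = 2 ^ 3 by norm_num, ← pow_add]; congr 1; omega⟩
  have h8n : (8:ℤ) ∣ 2 ^ n := ⟨2 ^ (n - 3), by
    rw [show (8:ℤ) = 2 ^ 3 by norm_num, ← pow_add]; congr 1; omega⟩
  have h2N : (8:ℤ) ∣ 2 * N := by
    have : (2:ℤ) * N = 2 ^ n - W := by linarith [hsum]
    rw [this]; exact dvd_sub h8n h8W
  have h4N : (4:ℤ) ∣ (N:ℤ) := by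
    obtain ⟨c, hc⟩ := h2N
    exact ⟨c, by linarith⟩
  exact_mod_cast h4N
end

section
/- Let n ≥ 3 be an integer, let Tr : F_{3^n} → F_3 denote the absolute trace, and let F : F_{3^n} → F_{3^n} be a function such that for every a ∈ F_{3^n} the map φ_a : F_{3^n} → F_3, φ_a(x) = Tr(a·F(x)), is a quadratic form over F_3 (i.e., φ_a(λ·x) = λ²·φ_a(x) for all λ ∈ F_3 and x ∈ F_{3^n}, and the map (x,y) ↦ φ_a(x+y) − φ_a(x) − φ_a(y) is F_3-bilinear). Then for every a ∈ F_{3^n}: Σ_{x ∈ F_{3^n}} (Tr(a·F(x)))² = 0 in F_3. -/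
open Finset Module

lemma sum_zmod3 (f : ZMod 3 → ZMod 3) : ∑ t : ZMod 3, f t = f 0 + f 1 + f 2 :=
  Fin.sum_univ_three f

/-- the linear map `w ↦ Fin.cons 0 w` -/
def cons0 (m : ℕ) : (Fin m → ZMod 3) →ₗ[ZMod 3] (Fin (m+1) → ZMod 3) where
  toFun w := Fin.cons 0 w
  map_add' u v := by funext i; refine Fin.cases ?_ ?_ i <;> simp
  map_smul' c v := by funext i; refine Fin.cases ?_ ?_ i <;> simp

def v0 (m : ℕ) : Fin (m+1) → ZMod 3 := Fin.cons 1 0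

lemma cons_decomp (m : ℕ) (t : ZMod 3) (w : Fin m → ZMod 3) :
    Fin.cons t w = t • v0 m + cons0 m w := by
  funext i
  refine Fin.cases ?_ ?_ i <;> simp [v0, cons0]

lemma sum_pi_succ (m : ℕ) (f : (Fin (m+1) → ZMod 3) → ZMod 3) :
    ∑ x : Fin (m+1) → ZMod 3, f x
      = ∑ t : ZMod 3, ∑ w : Fin m → ZMod 3, f (Fin.cons t w) := by
  rw [← Equiv.sum_comp (Fin.consEquiv (fun _ => ZMod 3)) f, Fintype.sum_prod_type]
  rfl

lemma card_pi_zero (m : ℕ) (hm : 1 ≤ m) :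
    ((Fintype.card (Fin m → ZMod 3) : ZMod 3)) = 0 := by
  have h : Fintype.card (Fin m → ZMod 3) = 3 ^ m := by
    simp [Fintype.card_pi]
  rw [h, Nat.cast_pow, show ((3:ℕ) : ZMod 3) = 0 from by decide]
  exact zero_pow (by omega)

lemma expand_cons {m : ℕ} (φ : (Fin (m+1) → ZMod 3) → ZMod 3)
    (B : (Fin (m+1) → ZMod 3) →ₗ[ZMod 3] (Fin (m+1) → ZMod 3) →ₗ[ZMod 3] ZMod 3)
    (H1 : ∀ (lam : ZMod 3) x, φ (lam • x) = lam ^ 2 * φ x)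
    (HB : ∀ x y, B x y = φ (x + y) - φ x - φ y)
    (t : ZMod 3) (w : Fin m → ZMod 3) :
    φ (Fin.cons t w)
      = t ^ 2 * φ (v0 m) + t * B (v0 m) (cons0 m w) + φ (cons0 m w) := by
  have hadd : ∀ x y, φ (x + y) = φ x + φ y + B x y := by
    intro x y
    have := HB x y
    linear_combination -this
  rw [cons_decomp, hadd, H1, map_smul]
  simp only [LinearMap.smul_apply, smul_eq_mul]
  ring

/-- first moment of a quadratic form vanishes for dim ≥ 2 -/
lemma quad_sum {m : ℕ} (hm : 1 ≤ m)
    (φ : (Fin (m+1) → ZMod 3) → ZMod 3)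
    (B : (Fin (m+1) → ZMod 3) →ₗ[ZMod 3] (Fin (m+1) → ZMod 3) →ₗ[ZMod 3] ZMod 3)
    (H1 : ∀ (lam : ZMod 3) x, φ (lam • x) = lam ^ 2 * φ x)
    (HB : ∀ x y, B x y = φ (x + y) - φ x - φ y) :
    ∑ x : Fin (m+1) → ZMod 3, φ x = 0 := by
  rw [sum_pi_succ, Finset.sum_comm]
  have key : ∀ w : Fin m → ZMod 3,
      ∑ t : ZMod 3, φ (Fin.cons t w) = 2 * φ (v0 m) := by
    intro w
    have e0 := expand_cons φ B H1 HB 0 w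
    have e1 := expand_cons φ B H1 HB 1 w
    have e2 := expand_cons φ B H1 HB 2 w
    rw [sum_zmod3 (fun t => φ (Fin.cons t w)), e0, e1, e2]
    have : ∀ a b e : ZMod 3,
        ((0:ZMod 3)^2*a + 0*b + e) + ((1:ZMod 3)^2*a + 1*b + e)
          + ((2:ZMod 3)^2*a + 2*b + e) = 2*a := by decide
    exact this _ _ _
  calc ∑ w : Fin m → ZMod 3, ∑ t : ZMod 3, φ (Fin.cons t w)
      = ∑ _w : Fin m → ZMod 3, 2 * φ (v0 m) :=
        Finset.sum_congr rfl (fun w _ => key w)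
    _ = (Fintype.card (Fin m → ZMod 3) : ZMod 3) * (2 * φ (v0 m)) := by
        rw [Finset.sum_const, card_univ, nsmul_eq_mul]
    _ = 0 := by rw [card_pi_zero m hm, zero_mul]

/-- second moment of a linear form vanishes for dim ≥ 2 -/
lemma lin_sum_sq {m : ℕ} (hm : 1 ≤ m)
    (L : (Fin (m+1) → ZMod 3) →ₗ[ZMod 3] ZMod 3) :
    ∑ x : Fin (m+1) → ZMod 3, (L x) ^ 2 = 0 := by
  rw [sum_pi_succ, Finset.sum_comm]
  have key : ∀ w : Fin m → ZMod 3,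
      ∑ t : ZMod 3, (L (Fin.cons t w)) ^ 2 = 2 * (L (v0 m)) ^ 2 := by
    intro w
    have hdec : ∀ t : ZMod 3, L (Fin.cons t w)
        = t * L (v0 m) + L (cons0 m w) := by
      intro t
      rw [cons_decomp, map_add, map_smul, smul_eq_mul]
    rw [sum_zmod3 (fun t => (L (Fin.cons t w)) ^ 2), hdec, hdec, hdec]
    have : ∀ a c : ZMod 3,
        ((0:ZMod 3)*a+c)^2 + ((1:ZMod 3)*a+c)^2 + ((2:ZMod 3)*a+c)^2 = 2*a^2 := by
      decide
    exact this _ _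
  calc ∑ w : Fin m → ZMod 3, ∑ t : ZMod 3, (L (Fin.cons t w))^2
      = ∑ _w : Fin m → ZMod 3, 2 * (L (v0 m))^2 :=
        Finset.sum_congr rfl (fun w _ => key w)
    _ = (Fintype.card (Fin m → ZMod 3) : ZMod 3) * (2 * (L (v0 m))^2) := by
        rw [Finset.sum_const, card_univ, nsmul_eq_mul]
    _ = 0 := by rw [card_pi_zero m hm, zero_mul]

/-- second moment of a quadratic form vanishes for dim ≥ 3 -/
lemma quad_sum_sq {m : ℕ} (hm : 2 ≤ m)
    (φ : (Fin (m+1) → ZMod 3) → ZMod 3)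
    (B : (Fin (m+1) → ZMod 3) →ₗ[ZMod 3] (Fin (m+1) → ZMod 3) →ₗ[ZMod 3] ZMod 3)
    (H1 : ∀ (lam : ZMod 3) x, φ (lam • x) = lam ^ 2 * φ x)
    (HB : ∀ x y, B x y = φ (x + y) - φ x - φ y) :
    ∑ x : Fin (m+1) → ZMod 3, (φ x) ^ 2 = 0 := by
  obtain ⟨k, rfl⟩ : ∃ k, m = k + 1 := ⟨m - 1, by omega⟩
  have key : ∀ w : Fin (k+1) → ZMod 3,
      ∑ t : ZMod 3, (φ (Fin.cons t w)) ^ 2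
        = 2 * (φ (v0 (k+1)))^2 + φ (v0 (k+1)) * φ (cons0 (k+1) w)
          + 2 * (B (v0 (k+1)) (cons0 (k+1) w))^2 := by
    intro w
    have e0 := expand_cons φ B H1 HB 0 w
    have e1 := expand_cons φ B H1 HB 1 w
    have e2 := expand_cons φ B H1 HB 2 w
    rw [sum_zmod3 (fun t => (φ (Fin.cons t w)) ^ 2), e0, e1, e2]
    have : ∀ a b e : ZMod 3,
        ((0:ZMod 3)^2*a + 0*b + e)^2 + ((1:ZMod 3)^2*a + 1*b + e)^2
          + ((2:ZMod 3)^2*a + 2*b + e)^2 = 2*a^2 + a*e + 2*b^2 := by decide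
    exact this _ _ _
  rw [sum_pi_succ, Finset.sum_comm]
  rw [Finset.sum_congr rfl (fun w _ => key w)]
  rw [Finset.sum_add_distrib, Finset.sum_add_distrib]
  have h1 : ∑ _w : Fin (k+1) → ZMod 3, 2 * (φ (v0 (k+1)))^2 = 0 := by
    rw [Finset.sum_const, card_univ, nsmul_eq_mul, card_pi_zero (k+1) (by omega), zero_mul]
  have h2 : ∑ w : Fin (k+1) → ZMod 3, φ (v0 (k+1)) * φ (cons0 (k+1) w) = 0 := by
    rw [← Finset.mul_sum]
    have hz : ∑ w : Fin (k+1) → ZMod 3, φ (cons0 (k+1) w) = 0 := by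
      apply quad_sum (by omega) (fun w => φ (cons0 (k+1) w))
        (B.compl₁₂ (cons0 (k+1)) (cons0 (k+1)))
      · intro lam x
        simp only [map_smul]
        exact H1 lam _
      · intro x y
        simp only [LinearMap.compl₁₂_apply, map_add]
        exact HB _ _
    rw [hz, mul_zero]
  have h3 : ∑ w : Fin (k+1) → ZMod 3, 2 * (B (v0 (k+1)) (cons0 (k+1) w))^2 = 0 := by
    rw [show (fun w => 2 * (B (v0 (k+1)) (cons0 (k+1) w))^2)
        = fun w => 2 * (((B (v0 (k+1))).comp (cons0 (k+1))) w)^2 from rfl]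
    rw [← Finset.mul_sum, lin_sum_sq (by omega) ((B (v0 (k+1))).comp (cons0 (k+1))), mul_zero]
  rw [h1, h2, h3]
  ring



/-- A map `φ : K → F₃` on an `F₃`-vector space is a quadratic form if it is homogeneous of
degree `2` and its polar form `(x,y) ↦ φ(x+y) − φ(x) − φ(y)` is `F₃`-bilinear. -/
def IsQuadraticFormZMod3 {K : Type} [AddCommGroup K] [Module (ZMod 3) K]
    (φ : K → ZMod 3) : Prop :=
  (∀ (lam : ZMod 3) (x : K), φ (lam • x) = lam ^ 2 * φ x) ∧
  ∃ B : K →ₗ[ZMod 3] K →ₗ[ZMod 3] ZMod 3,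
    ∀ x y : K, B x y = φ (x + y) - φ x - φ y

/-- Theorem 6.3: if `F : F_{3^n} → F_{3^n}` has all components
`x ↦ Tr(a·F(x))` quadratic forms over `F₃`, then for all `a` the quadratic moment
`Σ_x (Tr(a·F(x)))² = 0` in `F₃` (so the CSS code `(C_F, C_F^⊥)` admits a transversal
ternary phase gate `R₂`). -/
theorem stmt_18 (n : ℕ) (hn : 3 ≤ n)
    (K : Type) [Field K] [Fintype K] [Algebra (ZMod 3) K]
    (hK : Fintype.card K = 3 ^ n)
    (F : K → K)
    (hquad : ∀ a : K,
      IsQuadraticFormZMod3 (fun x : K => Algebra.trace (ZMod 3) K (a * F x))) :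
    ∀ a : K, ∑ x : K, (Algebra.trace (ZMod 3) K (a * F x)) ^ 2 = 0 := by
  intro a
  obtain ⟨H1, B, HB⟩ := hquad a
  set φ : K → ZMod 3 := fun x => Algebra.trace (ZMod 3) K (a * F x) with hφ
  obtain ⟨m, rfl⟩ : ∃ m, n = m + 1 := ⟨n - 1, by omega⟩
  have hfr : Module.finrank (ZMod 3) K = m + 1 := by
    have h := card_eq_pow_finrank (K := ZMod 3) (V := K)
    rw [ZMod.card, hK] at h
    exact (Nat.pow_right_injective (by norm_num) h.symm)
  let b : Basis (Fin (m+1)) (ZMod 3) K := Module.finBasisOfFinrankEq (ZMod 3) K hfr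
  let e : K ≃ₗ[ZMod 3] (Fin (m+1) → ZMod 3) := b.equivFun
  have htrans : ∑ x : K, (φ x) ^ 2 = ∑ v : Fin (m+1) → ZMod 3, (φ (e.symm v)) ^ 2 :=
    (Equiv.sum_comp e.symm.toEquiv (fun x => (φ x) ^ 2)).symm
  rw [htrans]
  apply quad_sum_sq (by omega) (fun v => φ (e.symm v))
    (B.compl₁₂ e.symm.toLinearMap e.symm.toLinearMap)
  · intro lam v
    simp only [map_smul]
    exact H1 lam _
  · intro x y
    simp only [LinearMap.compl₁₂_apply, LinearEquiv.coe_coe, map_add]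
    exact HB _ _
end
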